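/- Let γ > 2, λ > 2, T_M > 1, fix 0 < S_min ≤ S_max < 1, let (Ω, μ) be a finite measure space, and let C₀ > 0. There exists C' > 0, depending only on γ, λ, T_M, S_min, S_max, μ(Ω) and C₀, such that for every ε ∈ (0, 1/4], every S_D ∈ [S_min, S_max], and every measurable function S : Ω → ℝ with ∫_Ω E_ε(S(x)) dμ(x) ≤ C₀, one has: ∫_Ω (min(S,0))² dμ ≤ C' ε^γ, μ({S ≤ 0}) ≤ C' ε^{γ-2}, ∫_Ω (max(S−1,0))² dμ ≤ C' ε^λ, and μ({S ≥ 1}) ≤ C' ε^{λ-2}. -/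

import Mathlib

/-!
Writing `E_ε(s) = ∫_{S_D}^s (s - ξ) h_ε(ξ) dξ` shows that `E_ε ≥ 0` and that a lower bound
`h_ε ≥ m` on a subinterval `[a, b]` of `[s, S_D]` gives `E_ε(s) ≥ m ∫_a^b (ξ - s) dξ`. For `s ≤ 0`,
`h_ε ≥ ε^{-γ}` on `[s, 0]` gives `s² ≤ 2 ε^γ E_ε(s)`, and `h_ε ≥ (2ε)^{-γ}` on `[0, ε S_D]`, where
`Z_ε ≤ 2ε`, gives `E_ε(s) ≥ S_D² ε^{2-γ} / 2^{γ+1}`. The reflection `s ↦ 1 - s` turns `h_ε` into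
`T_M` times the same integrand with `γ` and `λ` exchanged, which yields the bounds for `s ≥ 1`.
Integrating the pointwise bounds (Markov's inequality for the two sets) against `∫ E_ε(S) ≤ C₀`
concludes.
-/

open MeasureTheory

/-- The cutting function `Z(s) = min(max(s,0),1)`. -/
noncomputable def Z (s : ℝ) : ℝ := min (max s 0) 1

/-- The regularized cutting function `Z_ε(s) = (1−2ε)Z(s) + ε`. -/
noncomputable def Zeps (ε s : ℝ) : ℝ := (1 - 2 * ε) * Z s + ε

/-- The integrand `h_ε(ξ) = Z_ε(ξ)^{-γ} + T_M (1 − Z_ε(ξ))^{-λ}` of the regularized entropy. -/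
noncomputable def heps (γ lam TM ε ξ : ℝ) : ℝ :=
  Zeps ε ξ ^ (-γ) + TM * (1 - Zeps ε ξ) ^ (-lam)

/-- The regularized entropy with base point `S_D`. -/
noncomputable def Eeps (γ lam TM ε SD s : ℝ) : ℝ :=
  s * (∫ ξ in SD..s, heps γ lam TM ε ξ) - ∫ ξ in SD..s, ξ * heps γ lam TM ε ξ

open Set

lemma Z_eq_zero_of_nonpos {s : ℝ} (hs : s ≤ 0) : Z s = 0 := by
  simp [Z, hs]

lemma Z_le_self {s : ℝ} (hs : 0 ≤ s) : Z s ≤ s := by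
  simp [Z, hs]

lemma Z_one_sub (s : ℝ) : Z (1 - s) = 1 - Z s := by
  simp only [Z, max_def, min_def]
  split_ifs <;> linarith

lemma continuous_Z : Continuous Z :=
  (continuous_id.max continuous_const).min continuous_const

lemma Zeps_of_nonpos (ε : ℝ) {s : ℝ} (hs : s ≤ 0) : Zeps ε s = ε := by
  simp [Zeps, Z_eq_zero_of_nonpos hs]

lemma Zeps_one_sub (ε s : ℝ) : Zeps ε (1 - s) = 1 - Zeps ε s := by
  rw [Zeps, Zeps, Z_one_sub]; ring

section Regularization

variable {ε : ℝ}

lemma Zeps_pos (hε : 0 < ε) (hε1 : ε < 1) (s : ℝ) : 0 < Zeps ε s := by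
  have h0 : 0 ≤ Z s := le_min (le_max_right s 0) zero_le_one
  have h1 : Z s ≤ 1 := min_le_right _ _
  unfold Zeps
  rcases le_total ε (1 / 2) with h | h <;> nlinarith

lemma Zeps_lt_one (hε : 0 < ε) (hε1 : ε < 1) (s : ℝ) : Zeps ε s < 1 := by
  have := Zeps_pos hε hε1 (1 - s)
  rw [Zeps_one_sub] at this; linarith

lemma continuous_Zeps (ε : ℝ) : Continuous (Zeps ε) :=
  (continuous_const.mul continuous_Z).add continuous_const

lemma continuous_heps (γ lam TM : ℝ) (hε : 0 < ε) (hε1 : ε < 1) :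
    Continuous (heps γ lam TM ε) :=
  ((continuous_Zeps ε).rpow_const fun ξ => Or.inl (Zeps_pos hε hε1 ξ).ne').add
    (continuous_const.mul ((continuous_const.sub (continuous_Zeps ε)).rpow_const
      fun ξ => Or.inl (sub_pos.2 (Zeps_lt_one hε hε1 ξ)).ne'))

lemma heps_nonneg (γ lam : ℝ) {TM : ℝ} (hTM : 0 ≤ TM) (hε : 0 < ε) (hε1 : ε < 1) (ξ : ℝ) :
    0 ≤ heps γ lam TM ε ξ :=
  add_nonneg (Real.rpow_nonneg (Zeps_pos hε hε1 ξ).le _)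
    (mul_nonneg hTM (Real.rpow_nonneg (sub_pos.2 (Zeps_lt_one hε hε1 ξ)).le _))

lemma heps_one_sub (γ lam : ℝ) {TM : ℝ} (hTM : TM ≠ 0) (ε ξ : ℝ) :
    heps γ lam TM ε (1 - ξ) = TM * heps lam γ TM⁻¹ ε ξ := by
  rw [heps, heps, Zeps_one_sub, sub_sub_cancel, mul_add, mul_inv_cancel_left₀ hTM, add_comm]

end Regularization

lemma integral_sub_mul_nonneg {h : ℝ → ℝ} (hh : ∀ ξ, 0 ≤ h ξ) (a s : ℝ) :
    0 ≤ ∫ ξ in a..s, (s - ξ) * h ξ := by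
  rcases le_total a s with has | hsa
  · exact intervalIntegral.integral_nonneg has fun ξ hξ =>
      mul_nonneg (sub_nonneg.2 hξ.2) (hh ξ)
  · rw [intervalIntegral.integral_symm, ← intervalIntegral.integral_neg]
    exact intervalIntegral.integral_nonneg hsa fun ξ hξ => by nlinarith [hh ξ, hξ.1]

lemma integral_sub_mul_comp_one_sub (g : ℝ → ℝ) (a s : ℝ) :
    ∫ ξ in a..s, (s - ξ) * g ξ = ∫ η in 1 - a..1 - s, (1 - s - η) * g (1 - η) := by
  have h := intervalIntegral.integral_comp_sub_left (fun ξ => (s - ξ) * g ξ)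
    (a := 1 - s) (b := 1 - a) 1
  simp only [sub_sub_cancel] at h
  rw [← h, intervalIntegral.integral_symm, ← intervalIntegral.integral_neg]
  congr 1; funext η; ring

lemma integral_sub_const (a b s : ℝ) :
    ∫ ξ in a..b, (ξ - s) = (b ^ 2 - a ^ 2) / 2 - (b - a) * s := by
  rw [intervalIntegral.integral_sub intervalIntegral.intervalIntegrable_id intervalIntegrable_const,
    integral_id, intervalIntegral.integral_const, smul_eq_mul]

lemma le_integral_sub_mul {h : ℝ → ℝ} (hc : Continuous h) (hh : ∀ ξ, 0 ≤ h ξ)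
    {s a b SD m : ℝ} (hsa : s ≤ a) (hab : a ≤ b) (hbSD : b ≤ SD)
    (hm : ∀ ξ ∈ Icc a b, m ≤ h ξ) :
    m * ∫ ξ in a..b, (ξ - s) ≤ ∫ ξ in SD..s, (s - ξ) * h ξ := by
  have hcont : Continuous fun ξ => (ξ - s) * h ξ := (continuous_id.sub continuous_const).mul hc
  calc m * ∫ ξ in a..b, (ξ - s)
      = ∫ ξ in a..b, m * (ξ - s) := (intervalIntegral.integral_const_mul m _).symm
    _ ≤ ∫ ξ in a..b, (ξ - s) * h ξ :=
        intervalIntegral.integral_mono_on hab (Continuous.intervalIntegrable (by fun_prop) _ _)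
          (hcont.intervalIntegrable _ _) fun ξ hξ => by
            rw [mul_comm]; exact mul_le_mul_of_nonneg_left (hm ξ hξ) (by linarith [hξ.1])
    _ ≤ ∫ ξ in s..SD, (ξ - s) * h ξ :=
        intervalIntegral.integral_mono_interval hsa hab hbSD
          ((ae_restrict_iff' measurableSet_Ioc).2 (.of_forall fun ξ hξ =>
            mul_nonneg (by linarith [hξ.1]) (hh ξ)))
          (hcont.intervalIntegrable _ _)
    _ = ∫ ξ in SD..s, (s - ξ) * h ξ := by
        rw [intervalIntegral.integral_symm, ← intervalIntegral.integral_neg]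
        congr 1; funext ξ; ring

section Entropy

variable {γ lam TM ε : ℝ}

lemma Eeps_eq_integral (γ lam TM SD : ℝ) (hε : 0 < ε) (hε1 : ε < 1) (s : ℝ) :
    Eeps γ lam TM ε SD s = ∫ ξ in SD..s, (s - ξ) * heps γ lam TM ε ξ := by
  have hc := continuous_heps γ lam TM hε hε1
  simp only [Eeps, sub_mul]
  rw [intervalIntegral.integral_sub (Continuous.intervalIntegrable (by fun_prop) _ _)
    (Continuous.intervalIntegrable (by fun_prop) _ _), intervalIntegral.integral_const_mul]

lemma Eeps_nonneg (γ lam SD : ℝ) (hTM : 0 ≤ TM) (hε : 0 < ε) (hε1 : ε < 1) (s : ℝ) :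
    0 ≤ Eeps γ lam TM ε SD s := by
  rw [Eeps_eq_integral γ lam TM SD hε hε1]
  exact integral_sub_mul_nonneg (heps_nonneg γ lam hTM hε hε1) SD s

lemma Eeps_eq_mul_Eeps_one_sub (γ lam : ℝ) (hTM : TM ≠ 0) (hε : 0 < ε) (hε1 : ε < 1)
    (SD s : ℝ) : Eeps γ lam TM ε SD s = TM * Eeps lam γ TM⁻¹ ε (1 - SD) (1 - s) := by
  rw [Eeps_eq_integral γ lam TM SD hε hε1, Eeps_eq_integral lam γ TM⁻¹ (1 - SD) hε hε1,
    integral_sub_mul_comp_one_sub, ← intervalIntegral.integral_const_mul]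
  congr 1; funext η
  rw [heps_one_sub γ lam hTM]; ring

end Entropy

section PointwiseBounds

variable {γ lam TM ε SD : ℝ}

lemma sq_min_zero_le_Eeps (γ lam : ℝ) (hTM : 0 ≤ TM) (hε : 0 < ε) (hε1 : ε < 1)
    (hSD : 0 ≤ SD) (s : ℝ) :
    min s 0 ^ 2 ≤ 2 * ε ^ γ * Eeps γ lam TM ε SD s := by
  rcases le_total 0 s with hs | hs
  · rw [min_eq_right hs, zero_pow two_ne_zero]
    exact mul_nonneg (by positivity) (Eeps_nonneg γ lam SD hTM hε hε1 s)
  have key : ε ^ (-γ) * ∫ ξ in s..0, (ξ - s) ≤ Eeps γ lam TM ε SD s := by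
    rw [Eeps_eq_integral γ lam TM SD hε hε1]
    refine le_integral_sub_mul (continuous_heps γ lam TM hε hε1) (heps_nonneg γ lam hTM hε hε1)
      le_rfl hs hSD fun ξ hξ => ?_
    rw [heps, Zeps_of_nonpos ε hξ.2]
    exact le_add_of_nonneg_right (mul_nonneg hTM (Real.rpow_nonneg (by linarith) _))
  have hint : ∫ ξ in s..0, (ξ - s) = s ^ 2 / 2 := by rw [integral_sub_const]; ring
  rw [hint, Real.rpow_neg hε.le] at key
  have hεγ : 0 < ε ^ γ := Real.rpow_pos_of_pos hε γ
  rw [min_eq_left hs]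
  calc s ^ 2 = 2 * ε ^ γ * ((ε ^ γ)⁻¹ * (s ^ 2 / 2)) := by field_simp
    _ ≤ 2 * ε ^ γ * Eeps γ lam TM ε SD s := by gcongr

lemma le_rpow_mul_Eeps_of_nonpos (lam : ℝ) (hγ : 0 ≤ γ) (hTM : 0 ≤ TM) (hε : 0 < ε)
    (hε2 : ε ≤ 1 / 2) (hSD0 : 0 ≤ SD) (hSD1 : SD ≤ 1) {s : ℝ} (hs : s ≤ 0) :
    SD ^ 2 / 2 ^ (γ + 1) ≤ ε ^ (γ - 2) * Eeps γ lam TM ε SD s := by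
  have hε1 : ε < 1 := by linarith
  have key : (2 * ε) ^ (-γ) * ∫ ξ in (0 : ℝ)..ε * SD, (ξ - s) ≤ Eeps γ lam TM ε SD s := by
    rw [Eeps_eq_integral γ lam TM SD hε hε1]
    refine le_integral_sub_mul (continuous_heps γ lam TM hε hε1) (heps_nonneg γ lam hTM hε hε1)
      hs (by positivity) (by nlinarith) fun ξ hξ => ?_
    have hZ : Zeps ε ξ ≤ 2 * ε := by
      have := mul_le_mul_of_nonneg_left (Z_le_self hξ.1) (by linarith : 0 ≤ 1 - 2 * ε)
      unfold Zeps; nlinarith [hξ.2, mul_le_of_le_one_right hε.le hSD1]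
    exact (Real.rpow_le_rpow_of_nonpos (Zeps_pos hε hε1 ξ) hZ (by linarith)).trans
      (le_add_of_nonneg_right
        (mul_nonneg hTM (Real.rpow_nonneg (sub_pos.2 (Zeps_lt_one hε hε1 ξ)).le _)))
  have hint : (ε * SD) ^ 2 / 2 ≤ ∫ ξ in (0 : ℝ)..ε * SD, (ξ - s) := by
    rw [integral_sub_const]; nlinarith [mul_nonneg hε.le hSD0]
  have hid : ε ^ (γ - 2) * ((2 * ε) ^ (-γ) * ((ε * SD) ^ 2 / 2)) = SD ^ 2 / 2 ^ (γ + 1) := by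
    rw [Real.mul_rpow zero_le_two hε.le, Real.rpow_neg zero_le_two, Real.rpow_neg hε.le,
      Real.rpow_sub hε, Real.rpow_two, Real.rpow_add_one two_ne_zero]
    field_simp
  calc SD ^ 2 / 2 ^ (γ + 1) = ε ^ (γ - 2) * ((2 * ε) ^ (-γ) * ((ε * SD) ^ 2 / 2)) := hid.symm
    _ ≤ ε ^ (γ - 2) * Eeps γ lam TM ε SD s := by
        gcongr
        exact (mul_le_mul_of_nonneg_left hint (by positivity)).trans key

end PointwiseBounds

section Reflected

variable {γ lam TM ε SD : ℝ}

lemma sq_max_sub_one_le_Eeps (γ lam : ℝ) (hTM : 1 ≤ TM) (hε : 0 < ε) (hε1 : ε < 1)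
    (hSD : SD ≤ 1) (s : ℝ) :
    max (s - 1) 0 ^ 2 ≤ 2 * ε ^ lam * Eeps γ lam TM ε SD s := by
  have hTM0 : 0 < TM := by linarith
  have hE := Eeps_nonneg lam γ (1 - SD) (inv_nonneg.2 hTM0.le) hε hε1 (1 - s)
  have hmax : max (s - 1) 0 = -min (1 - s) 0 := by
    rw [← neg_sub, ← max_neg_neg, neg_zero]
  rw [Eeps_eq_mul_Eeps_one_sub γ lam hTM0.ne' hε hε1, hmax, neg_sq]
  calc min (1 - s) 0 ^ 2 ≤ 2 * ε ^ lam * Eeps lam γ TM⁻¹ ε (1 - SD) (1 - s) :=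
        sq_min_zero_le_Eeps lam γ (inv_nonneg.2 hTM0.le) hε hε1 (sub_nonneg.2 hSD) _
    _ ≤ 2 * ε ^ lam * (TM * Eeps lam γ TM⁻¹ ε (1 - SD) (1 - s)) := by
        gcongr; exact le_mul_of_one_le_left hE hTM

lemma le_rpow_mul_Eeps_of_one_le (γ : ℝ) (hlam : 0 ≤ lam) (hTM : 1 ≤ TM) (hε : 0 < ε)
    (hε2 : ε ≤ 1 / 2) (hSD0 : 0 ≤ SD) (hSD1 : SD ≤ 1) {s : ℝ} (hs : 1 ≤ s) :
    (1 - SD) ^ 2 / 2 ^ (lam + 1) ≤ ε ^ (lam - 2) * Eeps γ lam TM ε SD s := by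
  have hTM0 : 0 < TM := by linarith
  have hE := Eeps_nonneg lam γ (1 - SD) (inv_nonneg.2 hTM0.le) hε (by linarith) (1 - s)
  rw [Eeps_eq_mul_Eeps_one_sub γ lam hTM0.ne' hε (by linarith)]
  calc (1 - SD) ^ 2 / 2 ^ (lam + 1) ≤ ε ^ (lam - 2) * Eeps lam γ TM⁻¹ ε (1 - SD) (1 - s) :=
        le_rpow_mul_Eeps_of_nonpos γ hlam (inv_nonneg.2 hTM0.le) hε hε2 (by linarith)
          (by linarith) (by linarith)
    _ ≤ ε ^ (lam - 2) * (TM * Eeps lam γ TM⁻¹ ε (1 - SD) (1 - s)) := by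
        gcongr; exact le_mul_of_one_le_left hE hTM

end Reflected

section Markov

variable {Ω : Type*} [MeasurableSpace Ω] {μ : Measure Ω} {F : Ω → ℝ} {C0 K : ℝ}

lemma lintegral_ofReal_const_mul_le (hF : Integrable F μ) (hF0 : ∀ x, 0 ≤ F x)
    (hFC : ∫ x, F x ∂μ ≤ C0) (hK : 0 ≤ K) :
    ∫⁻ x, ENNReal.ofReal (K * F x) ∂μ ≤ ENNReal.ofReal (K * C0) := by
  rw [← ofReal_integral_eq_lintegral_ofReal (hF.const_mul K)
    (.of_forall fun x => mul_nonneg hK (hF0 x)), integral_const_mul]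
  exact ENNReal.ofReal_le_ofReal (mul_le_mul_of_nonneg_left hFC hK)

lemma lintegral_ofReal_le_of_le_const_mul (hF : Integrable F μ) (hF0 : ∀ x, 0 ≤ F x)
    (hFC : ∫ x, F x ∂μ ≤ C0) (hK : 0 ≤ K) {g : Ω → ℝ} (hg : ∀ x, g x ≤ K * F x) :
    ∫⁻ x, ENNReal.ofReal (g x) ∂μ ≤ ENNReal.ofReal (K * C0) :=
  (lintegral_mono fun x => ENNReal.ofReal_le_ofReal (hg x)).trans
    (lintegral_ofReal_const_mul_le hF hF0 hFC hK)

lemma measure_le_of_le_const_mul (hF : Integrable F μ) (hF0 : ∀ x, 0 ≤ F x)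
    (hFC : ∫ x, F x ∂μ ≤ C0) (hK : 0 ≤ K) {c : ℝ} (hc : 0 < c) {T : Set Ω}
    (hT : MeasurableSet T) (hTF : ∀ x ∈ T, c ≤ K * F x) :
    μ T ≤ ENNReal.ofReal (c⁻¹ * K * C0) := by
  have hK' : 0 ≤ c⁻¹ * K := mul_nonneg (inv_nonneg.2 hc.le) hK
  calc μ T = ∫⁻ _ in T, 1 ∂μ := (setLIntegral_one T).symm
    _ ≤ ∫⁻ x in T, ENNReal.ofReal (c⁻¹ * K * F x) ∂μ := setLIntegral_mono' hT fun x hx => by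
        rw [← ENNReal.ofReal_one, mul_assoc]
        exact ENNReal.ofReal_le_ofReal ((one_le_inv_mul₀ hc).2 (hTF x hx))
    _ ≤ ∫⁻ x, ENNReal.ofReal (c⁻¹ * K * F x) ∂μ := setLIntegral_le_lintegral T _
    _ ≤ ENNReal.ofReal (c⁻¹ * K * C0) := lintegral_ofReal_const_mul_le hF hF0 hFC hK'

end Markov

theorem entropy_bound_controls_overshoot_general
    (γ lam TM : ℝ) (hγ : 2 < γ) (hlam : 2 < lam) (hTM : 1 < TM)
    (Smin Smax : ℝ) (h0 : 0 < Smin) (h2 : Smax < 1)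
    (Ω : Type*) [MeasurableSpace Ω] (μ : Measure Ω)
    (C0 : ℝ) (hC0 : 0 < C0) :
    ∃ C' > (0:ℝ),
      ∀ ε ∈ Set.Ioc (0:ℝ) (1/4), ∀ SD ∈ Set.Icc Smin Smax, ∀ S : Ω → ℝ,
        Measurable S →
        Integrable (fun x => Eeps γ lam TM ε SD (S x)) μ →
        (∫ x, Eeps γ lam TM ε SD (S x) ∂μ) ≤ C0 →
        (∫⁻ x, ENNReal.ofReal ((min (S x) 0) ^ 2) ∂μ) ≤ ENNReal.ofReal (C' * ε ^ γ) ∧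
        μ {x | S x ≤ 0} ≤ ENNReal.ofReal (C' * ε ^ (γ - 2)) ∧
        (∫⁻ x, ENNReal.ofReal ((max (S x - 1) 0) ^ 2) ∂μ) ≤
          ENNReal.ofReal (C' * ε ^ lam) ∧
        μ {x | 1 ≤ S x} ≤ ENNReal.ofReal (C' * ε ^ (lam - 2)) := by
  have h1Smax : 0 < 1 - Smax := by linarith
  set c₁ := Smin ^ 2 / 2 ^ (γ + 1)
  set c₂ := (1 - Smax) ^ 2 / 2 ^ (lam + 1)
  have hc₁ : 0 < c₁ := by positivity
  have hc₂ : 0 < c₂ := by positivity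
  refine ⟨C0 * (2 + c₁⁻¹ + c₂⁻¹), by positivity, ?_⟩
  rintro ε ⟨hε, hε4⟩ SD ⟨hSmin, hSmax⟩ S hS hint hC
  have hF0 : ∀ x, 0 ≤ Eeps γ lam TM ε SD (S x) := fun x =>
    Eeps_nonneg γ lam SD (by linarith) hε (by linarith) (S x)
  have hC' : ∀ k p : ℝ, k ≤ 2 + c₁⁻¹ + c₂⁻¹ →
      ENNReal.ofReal (k * ε ^ p * C0) ≤ ENNReal.ofReal (C0 * (2 + c₁⁻¹ + c₂⁻¹) * ε ^ p) :=
    fun k p hk => ENNReal.ofReal_le_ofReal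
      (by nlinarith [mul_le_mul_of_nonneg_right hk (Real.rpow_nonneg hε.le p)])
  have hinv : 0 ≤ c₁⁻¹ ∧ 0 ≤ c₂⁻¹ := ⟨by positivity, by positivity⟩
  refine ⟨?_, ?_, ?_, ?_⟩
  · exact (lintegral_ofReal_le_of_le_const_mul hint hF0 hC (by positivity) fun x =>
      sq_min_zero_le_Eeps γ lam (by linarith) hε (by linarith) (by linarith) (S x)).trans
      (hC' 2 γ (by linarith))
  · refine (measure_le_of_le_const_mul hint hF0 hC (by positivity) hc₁
      (measurableSet_le hS measurable_const) fun x hx => ?_).trans (hC' _ _ (by linarith))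
    exact (div_le_div_of_nonneg_right (pow_le_pow_left₀ h0.le hSmin 2) (by positivity)).trans
      (le_rpow_mul_Eeps_of_nonpos lam (by linarith) (by linarith) hε (by linarith) (by linarith)
        (by linarith) hx)
  · exact (lintegral_ofReal_le_of_le_const_mul hint hF0 hC (by positivity) fun x =>
      sq_max_sub_one_le_Eeps γ lam hTM.le hε (by linarith) (by linarith) (S x)).trans
      (hC' 2 lam (by linarith))
  · refine (measure_le_of_le_const_mul hint hF0 hC (by positivity) hc₂
      (measurableSet_le measurable_const hS) fun x hx => ?_).trans (hC' _ _ (by linarith))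
    exact (div_le_div_of_nonneg_right (pow_le_pow_left₀ h1Smax.le (by linarith) 2)
      (by positivity)).trans (le_rpow_mul_Eeps_of_one_le γ (by linarith) hTM.le hε
        (by linarith) (by linarith) (by linarith) hx)

/-- Proposition 8.1 of the paper (quantitative version): a uniform bound on the
integrated regularized entropy implies smallness of the negative part of `S`
and of its excess above `1`, with explicit powers of `ε`. -/
theorem entropy_bound_controls_overshoot
    (γ lam TM : ℝ) (hγ : 2 < γ) (hlam : 2 < lam) (hTM : 1 < TM)
    (Smin Smax : ℝ) (h0 : 0 < Smin) (h1 : Smin ≤ Smax) (h2 : Smax < 1)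
    (Ω : Type*) [MeasurableSpace Ω] (μ : Measure Ω) [IsFiniteMeasure μ]
    (C0 : ℝ) (hC0 : 0 < C0) :
    ∃ C' > (0:ℝ),
      ∀ ε ∈ Set.Ioc (0:ℝ) (1/4), ∀ SD ∈ Set.Icc Smin Smax, ∀ S : Ω → ℝ,
        Measurable S →
        Integrable (fun x => Eeps γ lam TM ε SD (S x)) μ →
        (∫ x, Eeps γ lam TM ε SD (S x) ∂μ) ≤ C0 →
        (∫⁻ x, ENNReal.ofReal ((min (S x) 0) ^ 2) ∂μ) ≤ ENNReal.ofReal (C' * ε ^ γ) ∧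
        μ {x | S x ≤ 0} ≤ ENNReal.ofReal (C' * ε ^ (γ - 2)) ∧
        (∫⁻ x, ENNReal.ofReal ((max (S x - 1) 0) ^ 2) ∂μ) ≤
          ENNReal.ofReal (C' * ε ^ lam) ∧
        μ {x | 1 ≤ S x} ≤ ENNReal.ofReal (C' * ε ^ (lam - 2)) :=
  entropy_bound_controls_overshoot_general γ lam TM hγ hlam hTM Smin Smax h0 h2 Ω μ C0 hC0
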